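/- Let ρ be a d×d density matrix and let U₁,…,U_N (N ≥ 2) be d×d unitary matrices. Then ∑_{s=1}^{N} I_ρ(U_s) ≥ (1/(2N−2)) { ∑_{1≤s<t≤N} I_ρ(U_s − U_t) + (2/(N(N−1))) [ ∑_{1≤s<t≤N} √( I_ρ(U_s + U_t) ) ]² }. -/

import Mathlib

open Matrix Finset
open scoped ComplexOrder

/-- The positive semidefinite square root of a positive semidefinite matrix
(the definition `Matrix.PosSemidef.sqrt` of the older Mathlib, since removed). -/
noncomputable def Matrix.PosSemidef.sqrt {n : Type*} [Fintype n] [DecidableEq n] {A : Matrix n n ℂ}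
    (hA : A.PosSemidef) : Matrix n n ℂ :=
  hA.1.eigenvectorUnitary.1 * diagonal ((↑) ∘ (√·) ∘ hA.1.eigenvalues) *
    (star hA.1.eigenvectorUnitary : Matrix n n ℂ)

/-- Wigner–Yanase skew information `I_ρ(A) = (1/2) Tr([√ρ, A]† [√ρ, A])` of a matrix `A`
with respect to a positive semidefinite matrix `ρ`, where `√ρ = hρ.sqrt` is the positive
semidefinite square root of `ρ`. -/
noncomputable def skewInfo {d : ℕ} {ρ : Matrix (Fin d) (Fin d) ℂ} (hρ : ρ.PosSemidef)
    (A : Matrix (Fin d) (Fin d) ℂ) : ℝ :=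
  (1 / 2 : ℝ) *
    (((hρ.sqrt * A - A * hρ.sqrt)ᴴ * (hρ.sqrt * A - A * hρ.sqrt)).trace).re

/-! Skew information is half the squared Frobenius norm of the commutator `[√ρ, A]`,
which is linear in `A`; hence `I_ρ(A - B) + I_ρ(A + B) = 2 I_ρ(A) + 2 I_ρ(B)`. Summing this
over the pairs `s < t` gives `∑ I_ρ(U_s - U_t) + ∑ I_ρ(U_s + U_t) = (2N - 2) ∑ I_ρ(U_s)`, and
Cauchy–Schwarz over the `N(N-1)/2` pairs bounds `(∑ √I_ρ(U_s + U_t))²` by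
`N(N-1)/2 · ∑ I_ρ(U_s + U_t)`. -/

lemma Fin.sum_sum_Ioi_add {M : Type*} [AddCommMonoid M] {N : ℕ} (g : Fin N → M) :
    ∑ s : Fin N, ∑ t ∈ Ioi s, (g s + g t) = (N - 1) • ∑ s, g s := by
  have swap : ∑ s : Fin N, ∑ t ∈ Ioi s, g t = ∑ t : Fin N, ∑ _s ∈ Iio t, g t :=
    Finset.sum_comm' (by simp)
  simp only [Finset.sum_add_distrib]
  rw [swap, ← Finset.sum_add_distrib, Finset.smul_sum]
  refine Finset.sum_congr rfl fun s _ => ?_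
  rw [Finset.sum_const, Finset.sum_const, ← add_smul, Fin.card_Ioi, Fin.card_Iio]
  congr 1
  omega

lemma Fin.card_sigma_Ioi (N : ℕ) :
    (((univ : Finset (Fin N)).sigma fun s => Ioi s).card : ℝ) = N * (N - 1) / 2 := by
  calc (((univ : Finset (Fin N)).sigma fun s => Ioi s).card : ℝ)
      = ∑ s : Fin N, ∑ t ∈ Ioi s, (1 / 2 + 1 / 2 : ℝ) := by
        rw [add_halves]; simp [Finset.card_sigma]
    _ = (N - 1) • ∑ _s : Fin N, (1 / 2 : ℝ) := Fin.sum_sum_Ioi_add _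
    _ = N * (N - 1) / 2 := by
      rcases N with _ | N
      · simp
      · simp only [add_tsub_cancel_right, Finset.sum_const, Finset.card_univ, Fintype.card_fin,
          nsmul_eq_mul, Nat.cast_add, Nat.cast_one]
        ring

lemma Fin.sq_sum_sum_Ioi_le {N : ℕ} (f : Fin N → Fin N → ℝ) :
    (∑ s : Fin N, ∑ t ∈ Ioi s, f s t) ^ 2 ≤
      N * (N - 1) / 2 * ∑ s : Fin N, ∑ t ∈ Ioi s, f s t ^ 2 := by
  simp only [Finset.sum_sigma', ← Fin.card_sigma_Ioi]
  exact sq_sum_le_card_mul_sum_sq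

theorem Matrix.trace_conjTranspose_mul_self_sub_add {R m n : Type*} [Ring R] [StarRing R]
    [Fintype m] [Fintype n] (X Y : Matrix m n R) :
    ((X - Y)ᴴ * (X - Y)).trace + ((X + Y)ᴴ * (X + Y)).trace =
      2 * (Xᴴ * X).trace + 2 * (Yᴴ * Y).trace := by
  simp only [conjTranspose_sub, conjTranspose_add, Matrix.sub_mul, Matrix.mul_sub,
    Matrix.add_mul, Matrix.mul_add, trace_add, trace_sub, two_mul]
  abel

section SkewInfo

variable {d : ℕ} {ρ : Matrix (Fin d) (Fin d) ℂ} (hρ : ρ.PosSemidef)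

lemma skewInfo_nonneg (A : Matrix (Fin d) (Fin d) ℂ) : 0 ≤ skewInfo hρ A := by
  have := (Complex.nonneg_iff.mp
    (posSemidef_conjTranspose_mul_self (hρ.sqrt * A - A * hρ.sqrt)).trace_nonneg).1
  unfold skewInfo
  positivity

lemma skewInfo_sub_add (A B : Matrix (Fin d) (Fin d) ℂ) :
    skewInfo hρ (A - B) + skewInfo hρ (A + B) = 2 * skewInfo hρ A + 2 * skewInfo hρ B := by
  have h := congrArg Complex.re <| trace_conjTranspose_mul_self_sub_add
    (hρ.sqrt * A - A * hρ.sqrt) (hρ.sqrt * B - B * hρ.sqrt)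
  simp only [Complex.add_re, Complex.mul_re, Complex.re_ofNat, Complex.im_ofNat, zero_mul,
    sub_zero] at h
  have hsub : hρ.sqrt * (A - B) - (A - B) * hρ.sqrt =
      (hρ.sqrt * A - A * hρ.sqrt) - (hρ.sqrt * B - B * hρ.sqrt) := by noncomm_ring
  have hadd : hρ.sqrt * (A + B) - (A + B) * hρ.sqrt =
      (hρ.sqrt * A - A * hρ.sqrt) + (hρ.sqrt * B - B * hρ.sqrt) := by noncomm_ring
  unfold skewInfo
  rw [hsub, hadd]
  linarith

end SkewInfo

theorem stmt_7_general {d N : ℕ} (hN : 2 ≤ N)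
    (ρ : Matrix (Fin d) (Fin d) ℂ) (hρ : ρ.PosSemidef)
    (U : Fin N → Matrix (Fin d) (Fin d) ℂ) :
    ∑ s, skewInfo hρ (U s) ≥
      (1 / (2 * (N : ℝ) - 2)) *
        ((∑ s : Fin N, ∑ t ∈ Finset.Ioi s, skewInfo hρ (U s - U t))
          + (2 / ((N : ℝ) * ((N : ℝ) - 1))) *
            (∑ s : Fin N, ∑ t ∈ Finset.Ioi s,
              Real.sqrt (skewInfo hρ (U s + U t))) ^ 2) := by
  set D := ∑ s : Fin N, ∑ t ∈ Ioi s, skewInfo hρ (U s - U t)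
  set P := ∑ s : Fin N, ∑ t ∈ Ioi s, skewInfo hρ (U s + U t)
  set S := ∑ s : Fin N, ∑ t ∈ Ioi s, √(skewInfo hρ (U s + U t))
  have hNR : (2 : ℝ) ≤ N := by exact_mod_cast hN
  have hDP : D + P = (2 * N - 2) * ∑ s, skewInfo hρ (U s) := by
    simp only [D, P, ← Finset.sum_add_distrib, skewInfo_sub_add,
      Fin.sum_sum_Ioi_add (fun s => 2 * skewInfo hρ (U s)), ← Finset.mul_sum, nsmul_eq_mul,
      Nat.cast_sub (by omega : 1 ≤ N), Nat.cast_one]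
    ring
  have hCS : S ^ 2 ≤ N * (N - 1) / 2 * P := by
    simpa only [Real.sq_sqrt (skewInfo_nonneg hρ _)] using
      Fin.sq_sum_sum_Ioi_le fun s t => √(skewInfo hρ (U s + U t))
  have hSP : 2 / (N * (N - 1)) * S ^ 2 ≤ P := by
    rw [div_mul_eq_mul_div, div_le_iff₀ (by nlinarith)]
    linarith
  rw [ge_iff_le, one_div_mul_eq_div, div_le_iff₀ (by linarith)]
  linarith

theorem stmt_7 {d N : ℕ} (hN : 2 ≤ N)
    (ρ : Matrix (Fin d) (Fin d) ℂ) (hρ : ρ.PosSemidef) (htr : ρ.trace = 1)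
    (U : Fin N → Matrix (Fin d) (Fin d) ℂ)
    (hU : ∀ s, U s ∈ Matrix.unitaryGroup (Fin d) ℂ) :
    ∑ s, skewInfo hρ (U s) ≥
      (1 / (2 * (N : ℝ) - 2)) *
        ((∑ s : Fin N, ∑ t ∈ Finset.Ioi s, skewInfo hρ (U s - U t))
          + (2 / ((N : ℝ) * ((N : ℝ) - 1))) *
            (∑ s : Fin N, ∑ t ∈ Finset.Ioi s,
              Real.sqrt (skewInfo hρ (U s + U t))) ^ 2) :=
  stmt_7_general hN ρ hρ U
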